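/- arXiv:2105.12552 — 4 statements merged into one kernel-verified Lean document; each statement's English description precedes it below -/
import Mathlib

section
/- Let S = (P, φ) be a SUT model, t a strength with 1 ≤ t ≤ |P|, and N ≥ 1. The propositional formula Sat_CX^{N,t,S}, over Boolean variables x_{i,p,v} (1 ≤ i ≤ N, p ∈ P, v ∈ d(p)) and c^i_τ (1 ≤ i ≤ N, τ ∈ Τa), consisting of the constraints (X), (SUTX), (CX) and (C), is satisfiable if and only if a mixed covering array with constraints CA(N;t,S) exists. -/
attribute [local instance] Classical.propDecidable

/-- A full assignment `υ` covers a tuple (partial assignment) `τ`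
if they assign the same value to every parameter in the domain of `τ`. -/
def covers {P : Type} {d : P → Type} (υ : ∀ p, d p) (τ : ∀ p, Option (d p)) : Prop :=
  ∀ (p : P) (v : d p), τ p = some v → υ p = v

/-- The set of parameters on which the tuple `τ` is defined. -/
noncomputable def tupleDom {P : Type} [Fintype P] {d : P → Type}
    (τ : ∀ p, Option (d p)) : Finset P :=
  Finset.univ.filter fun p => (τ p).isSome

/-- The finite set of allowed `t`-tuples of the SUT model `S = (P, d, φ)`:
tuples defined on exactly `t` parameters that are covered by some
accepted full assignment in `φ`. -/
noncomputable def allowedTuples {P : Type} [Fintype P] [DecidableEq P] {d : P → Type}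
    [∀ p, Fintype (d p)] (φ : Finset (∀ p, d p)) (t : ℕ) :
    Finset (∀ p, Option (d p)) :=
  Finset.univ.filter fun τ => (tupleDom τ).card = t ∧ ∃ A ∈ φ, covers A τ

/-- `Υ` is a mixed covering array with constraints `CA(N; t, S)`:
a sequence of `N` test cases (full assignments accepted by `φ`) such that
every allowed `t`-tuple is covered by at least one of them. -/
def isCA {P : Type} [Fintype P] [DecidableEq P] {d : P → Type}
    [∀ p, Fintype (d p)] (φ : Finset (∀ p, d p)) (t : ℕ) {N : ℕ}
    (Υ : Fin N → ∀ p, d p) : Prop :=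
  (∀ i, Υ i ∈ φ) ∧ ∀ τ ∈ allowedTuples φ t, ∃ i, covers (Υ i) τ

/-- The covering array number `CAN(t, S)`: the least `N` for which a
`CA(N; t, S)` exists. -/
noncomputable def CAN {P : Type} [Fintype P] [DecidableEq P] {d : P → Type}
    [∀ p, Fintype (d p)] (φ : Finset (∀ p, d p)) (t : ℕ) : ℕ :=
  sInf {N | ∃ Υ : Fin N → ∀ p, d p, isCA φ t Υ}

/-- The tuple number `T(N; t, S)`: the maximum number of allowed `t`-tuples
coverable by a sequence of `N` test cases. -/
noncomputable def TN {P : Type} [Fintype P] [DecidableEq P] {d : P → Type}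
    [∀ p, Fintype (d p)] (φ : Finset (∀ p, d p)) (t N : ℕ) : ℕ :=
  sSup {k | ∃ Υ : Fin N → ∀ p, d p, (∀ i, Υ i ∈ φ) ∧
    k = ((allowedTuples φ t).filter fun τ => ∃ i, covers (Υ i) τ).card}

/-- The SAT formula `Sat_CX^{N,t,S}`, consisting of the
constraints (X), (SUTX), (CX) and (C) over the Boolean variables `x i p v`
and `c i τ`, is satisfiable iff a mixed covering array with constraints
`CA(N; t, S)` exists. -/
theorem satCX_satisfiable_iff_CA_exists
    {P : Type} [Fintype P] [DecidableEq P]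
    {d : P → Type} [∀ p, Fintype (d p)] [∀ p, Nonempty (d p)]
    (φ : Finset (∀ p, d p)) (hφ : φ.Nonempty)
    (t N : ℕ) (ht1 : 1 ≤ t) (ht2 : t ≤ Fintype.card P) (hN : 1 ≤ N) :
    (∃ (x : Fin N → ∀ p, d p → Bool) (c : Fin N → (∀ p, Option (d p)) → Bool),
      -- (X): each parameter takes exactly one value in each test
      (∀ i p, ∃! v, x i p v = true) ∧
      -- (SUTX): the full assignment induced by each test belongs to φ
      (∀ i, ∃ A ∈ φ, ∀ p, x i p (A p) = true) ∧
      -- (CX): c i τ → x i p v for each (p, v) ∈ τ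
      (∀ i, ∀ τ ∈ allowedTuples φ t, ∀ p v, τ p = some v →
        c i τ = true → x i p v = true) ∧
      -- (C): every allowed tuple is covered by some test
      (∀ τ ∈ allowedTuples φ t, ∃ i, c i τ = true)) ↔
    ∃ Υ : Fin N → ∀ p, d p, isCA φ t Υ := by
  constructor
  · rintro ⟨x, c, hX, hSUTX, hCX, hC⟩
    choose A hAφ hAx using hSUTX
    refine ⟨A, hAφ, fun τ hτ => ?_⟩
    obtain ⟨i, hci⟩ := hC τ hτ
    refine ⟨i, fun p v hpv => ?_⟩
    have hx := hCX i τ hτ p v hpv hci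
    obtain ⟨w, hw, huniq⟩ := hX i p
    have h1 := huniq v hx
    have h2 := huniq (A i p) (hAx i p)
    rw [h1, h2]
  · rintro ⟨Υ, hΥφ, hΥcov⟩
    refine ⟨fun i p v => decide (Υ i p = v), fun i τ => decide (covers (Υ i) τ),
      ?_, ?_, ?_, ?_⟩
    · intro i p
      exact ⟨Υ i p, by simp, fun v hv => (of_decide_eq_true hv).symm⟩
    · intro i
      exact ⟨Υ i, hΥφ i, fun p => by simp⟩
    · intro i τ hτ p v hpv hc
      exact decide_eq_true ((of_decide_eq_true hc) p v hpv)
    · intro τ hτ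
      obtain ⟨i, hi⟩ := hΥcov τ hτ
      exact ⟨i, decide_eq_true hi⟩
end

section
/- Let S = (P, φ) be a SUT model, t a strength with 1 ≤ t ≤ |P|, and N ≥ 1. The propositional formula Sat_CCX^{N,t,S}, over Boolean variables x_{i,p,v} (1 ≤ i ≤ N, p ∈ P, v ∈ d(p)) and c^i_τ (0 ≤ i ≤ N, τ ∈ Τa), consisting of the constraints (X), (SUTX), (CCX-a), (CCX-b) and (CCX-c), is satisfiable if and only if a mixed covering array with constraints CA(N;t,S) exists. -/
attribute [local instance] Classical.propDecidable

/-- The SAT formula `Sat_CCX^{N,t,S}`, consisting of the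
constraints (X), (SUTX), (CCX-a), (CCX-b) and (CCX-c) over the Boolean
variables `x i p v` (1 ≤ i ≤ N) and `c i τ` (0 ≤ i ≤ N), is satisfiable iff
a mixed covering array with constraints `CA(N; t, S)` exists. -/
theorem satCCX_satisfiable_iff_CA_exists
    {P : Type} [Fintype P] [DecidableEq P]
    {d : P → Type} [∀ p, Fintype (d p)] [∀ p, Nonempty (d p)]
    (φ : Finset (∀ p, d p)) (hφ : φ.Nonempty)
    (t N : ℕ) (ht1 : 1 ≤ t) (ht2 : t ≤ Fintype.card P) (hN : 1 ≤ N) :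
    (∃ (x : ℕ → ∀ p, d p → Bool) (c : ℕ → (∀ p, Option (d p)) → Bool),
      -- (X): each parameter takes exactly one value in each test
      (∀ i, 1 ≤ i → i ≤ N → ∀ p, ∃! v, x i p v = true) ∧
      -- (SUTX): the full assignment induced by each test belongs to φ
      (∀ i, 1 ≤ i → i ≤ N → ∃ A ∈ φ, ∀ p, x i p (A p) = true) ∧
      -- (CCX-a): c i τ → (c (i-1) τ ∨ x i p v) for each (p, v) ∈ τ
      (∀ i, 1 ≤ i → i ≤ N → ∀ τ ∈ allowedTuples φ t, ∀ p v, τ p = some v →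
        c i τ = true → (c (i - 1) τ = true ∨ x i p v = true)) ∧
      -- (CCX-b): the unit clause c N τ
      (∀ τ ∈ allowedTuples φ t, c N τ = true) ∧
      -- (CCX-c): c N τ → ¬ c 0 τ
      (∀ τ ∈ allowedTuples φ t, c N τ = true → c 0 τ = false)) ↔
    ∃ Υ : Fin N → ∀ p, d p, isCA φ t Υ := by
  constructor
  · rintro ⟨x, c, hX, hSUTX, hA, hB, hC⟩
    have hE : ∀ j : Fin N, ∃ A ∈ φ, ∀ p, x ((j : ℕ) + 1) p (A p) = true := by
      intro j
      exact hSUTX ((j : ℕ) + 1) (by omega) (by omega)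
    choose Y hYφ hYx using hE
    refine ⟨Y, hYφ, ?_⟩
    intro τ hτ
    have hcN := hB τ hτ
    have hc0 := hC τ hτ hcN
    have hex : ∃ i, c i τ = true ∧ i ≤ N := ⟨N, hcN, le_refl N⟩
    classical
    set i := Nat.find hex with hidef
    have hi := Nat.find_spec hex
    rw [← hidef] at hi
    have hi1 : 1 ≤ i := by
      rcases Nat.eq_zero_or_pos i with h0 | h0
      · rw [h0] at hi
        rw [hi.1] at hc0
        exact absurd hc0 (by simp)
      · exact h0
    have hiN : i ≤ N := hi.2
    have hprev : c (i - 1) τ = false := by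
      by_contra h
      have h' : c (i - 1) τ = true := by
        cases hcc : c (i - 1) τ
        · exact absurd hcc h
        · rfl
      exact Nat.find_min hex (show i - 1 < i by omega) ⟨h', by omega⟩
    have hjlt : i - 1 < N := by omega
    refine ⟨⟨i - 1, hjlt⟩, ?_⟩
    intro p v hpv
    have hx : x i p v = true := by
      rcases hA i hi1 hiN τ hτ p v hpv hi.1 with h | h
      · rw [hprev] at h; exact absurd h (by simp)
      · exact h
    have hux := hYx ⟨i - 1, hjlt⟩ p
    have heq : ((⟨i - 1, hjlt⟩ : Fin N) : ℕ) + 1 = i := by simp; omega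
    rw [heq] at hux
    obtain ⟨w, hw, huniq⟩ := hX i hi1 hiN p
    have h1 := huniq v hx
    have h2 := huniq _ hux
    rw [h1, h2]
  · rintro ⟨Y, hYφ, hcov⟩
    refine ⟨fun i p v => if h : i - 1 < N then decide (Y ⟨i - 1, h⟩ p = v) else true,
            fun i τ => decide (∃ j : Fin N, (j : ℕ) < i ∧ covers (Y j) τ),
            ?_, ?_, ?_, ?_, ?_⟩
    · intro i h1 h2 p
      have h : i - 1 < N := by omega
      refine ⟨Y ⟨i - 1, h⟩ p, by simp [h], ?_⟩
      intro v hv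
      simp [h] at hv
      exact hv.symm
    · intro i h1 h2
      have h : i - 1 < N := by omega
      exact ⟨Y ⟨i - 1, h⟩, hYφ _, fun p => by simp [h]⟩
    · intro i h1 h2 τ hτ p v hpv hc
      have h : i - 1 < N := by omega
      simp only [decide_eq_true_eq] at hc
      obtain ⟨j, hji, hcovj⟩ := hc
      rcases Nat.lt_or_ge (j : ℕ) (i - 1) with hlt | hge
      · left
        simp only [decide_eq_true_eq]
        exact ⟨j, hlt, hcovj⟩
      · right
        have hj : (j : ℕ) = i - 1 := by omega
        have : (⟨i - 1, h⟩ : Fin N) = j := by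
          apply Fin.ext; simp [hj]
        simp [dif_pos h, this]
        exact hcovj p v hpv
    · intro τ hτ
      obtain ⟨j, hj⟩ := hcov τ hτ
      simp only [decide_eq_true_eq]
      exact ⟨j, j.isLt, hj⟩
    · intro τ hτ _
      simp
end

section
/- Let S = (P, φ) be a SUT model, t a strength, π ⊆ P a set of exactly t parameters, and τ_1, …, τ_r the distinct allowed t-tuples whose domain is π. If Υ is a mixed covering array CA(N;t,S), then N ≥ r and there exists a permutation of the tests of Υ that is again a CA(N;t,S) and in which, for every 1 ≤ i ≤ r, the i-th test covers τ_i. Consequently, fixing tuple τ_i in test i for i = 1, …, r (fixed-tuple symmetry breaking) preserves the existence of a covering array of any size N ≥ r, and in particular preserves CAN(t,S). -/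
attribute [local instance] Classical.propDecidable

/-!
The tuples `τs i` share the domain `π`, so no test covers two of them. Choosing for each
`τs i` a test of the covering array that covers it therefore gives an injection of the
tuples into the tests, whence `r ≤ N`; extending this injection to a permutation of the
tests moves the chosen test of `τs i` to position `i`, and permuting tests preserves the
covering array property.
-/

theorem eq_of_covers_of_tupleDom_eq {P : Type} [Fintype P] {d : P → Type}
    {υ : ∀ p, d p} {τ₁ τ₂ : ∀ p, Option (d p)} (h₁ : covers υ τ₁) (h₂ : covers υ τ₂)
    (hdom : tupleDom τ₁ = tupleDom τ₂) : τ₁ = τ₂ := by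
  funext p
  have hsome : (τ₁ p).isSome ↔ (τ₂ p).isSome := by
    simpa only [tupleDom, Finset.mem_filter, Finset.mem_univ, true_and]
      using Finset.ext_iff.mp hdom p
  cases hv₁ : τ₁ p <;> cases hv₂ : τ₂ p <;> rw [hv₁, hv₂] at hsome
  case some.some v w => rw [← h₁ p v hv₁, h₂ p w hv₂]
  all_goals simp at hsome

section CoveringArray

variable {P : Type} [Fintype P] [DecidableEq P] {d : P → Type} [∀ p, Fintype (d p)]
  {φ : Finset (∀ p, d p)} {t N : ℕ} {Υ : Fin N → ∀ p, d p}

theorem isCA.comp_perm (hCA : isCA φ t Υ) (σ : Equiv.Perm (Fin N)) :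
    isCA φ t (Υ ∘ σ) := by
  refine ⟨fun j => hCA.1 (σ j), fun τ hτ => ?_⟩
  obtain ⟨j, hj⟩ := hCA.2 τ hτ
  exact ⟨σ.symm j, by simpa using hj⟩

theorem isCA.exists_injective_covers {ι : Type*} {π : Finset P}
    {τs : ι → ∀ p, Option (d p)} (hCA : isCA φ t Υ) (hinj : Function.Injective τs)
    (hτs : ∀ i, τs i ∈ allowedTuples φ t ∧ tupleDom (τs i) = π) :
    ∃ f : ι → Fin N, Function.Injective f ∧ ∀ i, covers (Υ (f i)) (τs i) := by
  choose f hf using fun i => hCA.2 (τs i) (hτs i).1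
  refine ⟨f, fun i j hij => hinj ?_, hf⟩
  refine eq_of_covers_of_tupleDom_eq (hf i) (hij ▸ hf j) ?_
  rw [(hτs i).2, (hτs j).2]

theorem isCA.exists_perm_covers_castLE {π : Finset P} {r : ℕ}
    {τs : Fin r → ∀ p, Option (d p)} (hCA : isCA φ t Υ) (hinj : Function.Injective τs)
    (hτs : ∀ i, τs i ∈ allowedTuples φ t ∧ tupleDom (τs i) = π) :
    ∃ (h : r ≤ N) (σ : Equiv.Perm (Fin N)),
      isCA φ t (fun j => Υ (σ j)) ∧ ∀ i : Fin r, covers (Υ (σ (Fin.castLE h i))) (τs i) := by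
  obtain ⟨f, hf, hcov⟩ := hCA.exists_injective_covers hinj hτs
  have hrN : r ≤ N := by simpa using Fintype.card_le_of_injective f hf
  obtain ⟨σ, hσ⟩ := Equiv.Perm.exists_extending_pair _ f (Fin.castLE_injective hrN) hf
  exact ⟨hrN, σ, hCA.comp_perm σ, fun i => hσ i ▸ hcov i⟩

end CoveringArray

theorem fixed_tuple_symmetry_breaking_general
    {P : Type} [Fintype P] [DecidableEq P]
    {d : P → Type} [∀ p, Fintype (d p)]
    (φ : Finset (∀ p, d p))
    (t : ℕ)
    (π : Finset P)
    (r : ℕ) (τs : Fin r → ∀ p, Option (d p))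
    (hinj : Function.Injective τs)
    (hrange : ∀ τ, (τ ∈ allowedTuples φ t ∧ tupleDom τ = π) ↔ ∃ i, τs i = τ)
    (N : ℕ) (Υ : Fin N → ∀ p, d p) (hCA : isCA φ t Υ) :
    (∃ (h : r ≤ N) (σ : Equiv.Perm (Fin N)),
      isCA φ t (fun j => Υ (σ j)) ∧
      ∀ i : Fin r, covers (Υ (σ (Fin.castLE h i))) (τs i)) ∧
    CAN φ t = sInf {M | ∃ (hM : r ≤ M) (Υ' : Fin M → ∀ p, d p),
      isCA φ t Υ' ∧ ∀ i : Fin r, covers (Υ' (Fin.castLE hM i)) (τs i)} := by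
  have hτs : ∀ i, τs i ∈ allowedTuples φ t ∧ tupleDom (τs i) = π :=
    fun i => (hrange (τs i)).mpr ⟨i, rfl⟩
  refine ⟨hCA.exists_perm_covers_castLE hinj hτs, congrArg sInf ?_⟩
  ext M
  refine ⟨fun ⟨Υ', hΥ'⟩ => ?_, fun ⟨_, Υ', hΥ', _⟩ => ⟨Υ', hΥ'⟩⟩
  obtain ⟨hM, σ, hσ, hcov⟩ := hΥ'.exists_perm_covers_castLE hinj hτs
  exact ⟨hM, _, hσ, hcov⟩

/-- **fixed-tuple symmetry breaking.**  Let `π ⊆ P` be a set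
of exactly `t` parameters and `τs 0, …, τs (r-1)` an enumeration (without
repetitions) of the allowed `t`-tuples whose domain is `π`.  If `Υ` is a
`CA(N;t,S)`, then `r ≤ N` and some permutation of the tests of `Υ` is again
a `CA(N;t,S)` in which, for every `i < r`, the `i`-th test covers `τs i`.
Consequently, fixing tuple `τs i` in test `i` preserves the covering array
number `CAN(t,S)`. -/
theorem fixed_tuple_symmetry_breaking
    {P : Type} [Fintype P] [DecidableEq P]
    {d : P → Type} [∀ p, Fintype (d p)] [∀ p, Nonempty (d p)]
    (φ : Finset (∀ p, d p)) (hφ : φ.Nonempty)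
    (t : ℕ) (ht1 : 1 ≤ t) (ht2 : t ≤ Fintype.card P)
    (π : Finset P) (hπ : π.card = t)
    (r : ℕ) (τs : Fin r → ∀ p, Option (d p))
    (hinj : Function.Injective τs)
    (hrange : ∀ τ, (τ ∈ allowedTuples φ t ∧ tupleDom τ = π) ↔ ∃ i, τs i = τ)
    (N : ℕ) (Υ : Fin N → ∀ p, d p) (hCA : isCA φ t Υ) :
    (∃ (h : r ≤ N) (σ : Equiv.Perm (Fin N)),
      isCA φ t (fun j => Υ (σ j)) ∧
      ∀ i : Fin r, covers (Υ (σ (Fin.castLE h i))) (τs i)) ∧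
    CAN φ t = sInf {M | ∃ (hM : r ≤ M) (Υ' : Fin M → ∀ p, d p),
      isCA φ t Υ' ∧ ∀ i : Fin r, covers (Υ' (Fin.castLE hM i)) (τs i)} :=
  fixed_tuple_symmetry_breaking_general φ t π r τs hinj hrange N Υ hCA
end

section
/- Let S = (P, φ) be a SUT model, t a strength with 1 ≤ t ≤ |P|, and N ≥ 1. Consider Boolean variables x_{i,p,v} (1 ≤ i ≤ N, p ∈ P, v ∈ d(p)) and c^i_τ (0 ≤ i ≤ N, τ ∈ Τa), and any truth assignment satisfying: (X) for each i and p exactly one v ∈ d(p) has x_{i,p,v} true; the unit clauses ¬c^0_τ for each τ ∈ Τa; and the biimplications c^i_τ ↔ (c^{i-1}_τ ∨ ⋀_{(p,v)∈τ} x_{i,p,v}) for each 1 ≤ i ≤ N and τ ∈ Τa. Then for every τ ∈ Τa and every 1 ≤ i ≤ N, c^i_τ is true if and only if some test among the first i induced tests covers τ; in particular, the number of variables c^N_τ assigned true equals the number of allowed t-tuples covered by the induced N-test suite. -/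
attribute [local instance] Classical.propDecidable

/-- **correctness of the full-biimplication CCX chain.**
For any truth assignment satisfying (X), the unit clauses `¬c^0_τ`, and the
biimplications `c^i_τ ↔ (c^{i-1}_τ ∨ ⋀_{(p,v)∈τ} x_{i,p,v})` for
`1 ≤ i ≤ N` and `τ ∈ Τa`, the variable `c^i_τ` is true iff some test among
the first `i` induced tests covers `τ`; in particular the number of `c^N_τ`
set to true equals the number of allowed `t`-tuples covered by the induced
`N`-test suite. -/
theorem ccx_chain_biimp_correct
    {P : Type} [Fintype P] [DecidableEq P]
    {d : P → Type} [∀ p, Fintype (d p)] [∀ p, Nonempty (d p)]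
    (φ : Finset (∀ p, d p)) (hφ : φ.Nonempty)
    (t N : ℕ) (ht1 : 1 ≤ t) (ht2 : t ≤ Fintype.card P) (hN : 1 ≤ N)
    (x : ℕ → ∀ p, d p → Bool) (c : ℕ → (∀ p, Option (d p)) → Bool)
    -- (X): each parameter takes exactly one value in each test
    (hX : ∀ i, 1 ≤ i → i ≤ N → ∀ p, ∃! v, x i p v = true)
    -- unit clauses ¬c^0_τ
    (h0 : ∀ τ ∈ allowedTuples φ t, c 0 τ = false)
    -- biimplications c^i_τ ↔ (c^{i-1}_τ ∨ ⋀_{(p,v)∈τ} x_{i,p,v})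
    (hbi : ∀ i, 1 ≤ i → i ≤ N → ∀ τ ∈ allowedTuples φ t,
      (c i τ = true ↔
        (c (i - 1) τ = true ∨ ∀ p v, τ p = some v → x i p v = true))) :
    (∀ τ ∈ allowedTuples φ t, ∀ i, 1 ≤ i → i ≤ N →
      (c i τ = true ↔
        ∃ j, 1 ≤ j ∧ j ≤ i ∧ ∀ p v, τ p = some v → x j p v = true)) ∧
    ((allowedTuples φ t).filter fun τ => c N τ = true).card
      = ((allowedTuples φ t).filter fun τ =>
          ∃ j, 1 ≤ j ∧ j ≤ N ∧ ∀ p v, τ p = some v → x j p v = true).card := by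
  have main : ∀ τ ∈ allowedTuples φ t, ∀ i, 1 ≤ i → i ≤ N →
      (c i τ = true ↔
        ∃ j, 1 ≤ j ∧ j ≤ i ∧ ∀ p v, τ p = some v → x j p v = true) := by
    intro τ hτ i
    induction i with
    | zero => intro h; omega
    | succ n ih =>
      intro _ hle
      rw [hbi (n+1) (by omega) hle τ hτ]
      simp only [Nat.add_sub_cancel]
      rcases Nat.eq_zero_or_pos n with hn | hn
      · subst hn
        rw [h0 τ hτ]
        constructor
        · rintro (h | h)
          · simp at h
          · exact ⟨1, le_refl _, le_refl _, h⟩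
        · rintro ⟨j, h1, h2, h3⟩
          have : j = 1 := by omega
          subst this
          exact Or.inr h3
      · rw [ih hn (by omega)]
        constructor
        · rintro (⟨j, h1, h2, h3⟩ | h)
          · exact ⟨j, h1, by omega, h3⟩
          · exact ⟨n+1, by omega, le_refl _, h⟩
        · rintro ⟨j, h1, h2, h3⟩
          rcases Nat.lt_or_ge j (n+1) with hj | hj
          · exact Or.inl ⟨j, h1, by omega, h3⟩
          · have : j = n+1 := by omega
            subst this
            exact Or.inr h3
  refine ⟨main, Finset.card_bij (fun τ _ => τ) ?_ ?_ ?_⟩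
  · intro τ h
    simp only [Finset.mem_filter] at h ⊢
    exact ⟨h.1, (main τ h.1 N hN le_rfl).mp h.2⟩
  · intro a b _ _ h; exact h
  · intro τ h
    simp only [Finset.mem_filter] at h
    refine ⟨τ, ?_, rfl⟩
    simp only [Finset.mem_filter]
    exact ⟨h.1, (main τ h.1 N hN le_rfl).mpr h.2⟩
end
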